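/- arXiv:1508.04178 — 2 statements merged into one kernel-verified Lean document; each statement's English description precedes it below -/
import Mathlib

section
/- Suppose β⁽¹⁾, β⁽²⁾ ∈ ℝ^p, α⁽¹⁾, α⁽²⁾ ∈ ℝ^r, and Γ ∈ ℝ^{p×r} satisfy β⁽¹⁾ + Γα⁽¹⁾ = β⁽²⁾ + Γα⁽²⁾. Let 𝒞 be a known set of indices with |𝒞| ≥ r such that β⁽¹⁾_𝒞 = β⁽²⁾_𝒞 = 0 and the submatrix Γ_𝒞 has rank r. Then α⁽¹⁾ = α⁽²⁾ and β⁽¹⁾ = β⁽²⁾. -/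
open Matrix

/-- Identifiability of (α, β) under the negative-control condition. -/
theorem negative_control_identifiability
    {p r : ℕ} (β₁ β₂ : Fin p → ℝ) (α₁ α₂ : Fin r → ℝ)
    (Γ : Matrix (Fin p) (Fin r) ℝ)
    (heq : β₁ + Γ.mulVec α₁ = β₂ + Γ.mulVec α₂)
    (C : Finset (Fin p)) (hcard : r ≤ C.card)
    (hβ₁ : ∀ j ∈ C, β₁ j = 0) (hβ₂ : ∀ j ∈ C, β₂ j = 0)
    (hrank : (Γ.submatrix (fun i : {x // x ∈ C} => (i : Fin p)) id).rank = r) :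
    α₁ = α₂ ∧ β₁ = β₂ := by
  set M := Γ.submatrix (fun i : {x // x ∈ C} => (i : Fin p)) id with hM
  have hker : LinearMap.ker M.mulVecLin = ⊥ := by
    have h1 := LinearMap.finrank_range_add_finrank_ker M.mulVecLin
    rw [Module.finrank_fintype_fun_eq_card, Fintype.card_fin] at h1
    have h2 : Matrix.rank M = Module.finrank ℝ (LinearMap.range M.mulVecLin) := rfl
    rw [← h2, hrank] at h1
    have hk0 : Module.finrank ℝ (LinearMap.ker M.mulVecLin) = 0 := by omega
    exact Submodule.finrank_eq_zero.mp hk0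
  have hinj : Function.Injective M.mulVec := by
    intro x y hxy
    have : M.mulVecLin x = M.mulVecLin y := hxy
    exact LinearMap.ker_eq_bot.mp hker this
  have hα : α₁ = α₂ := by
    apply hinj
    funext i
    have h := congrFun heq (i : Fin p)
    simp only [Pi.add_apply, hβ₁ i i.2, hβ₂ i i.2, zero_add] at h
    simpa [hM, Matrix.mulVec, Matrix.submatrix] using h
  refine ⟨hα, ?_⟩
  funext j
  have h := congrFun heq j
  simp only [Pi.add_apply, hα] at h
  linarith
end

section
/- Suppose β⁽¹⁾, β⁽²⁾ ∈ ℝ^p, α⁽¹⁾, α⁽²⁾ ∈ ℝ^r, Γ ∈ ℝ^{p×r}, and β⁽¹⁾ + Γα⁽¹⁾ = β⁽²⁾ + Γα⁽²⁾. Fix s with r ≤ s ≤ p, and assume ‖β⁽¹⁾‖₀ ≤ ⌊(p−s)/2⌋, ‖β⁽²⁾‖₀ ≤ ⌊(p−s)/2⌋, and for every subset 𝒞 ⊆ {1,…,p} of size s, the submatrix Γ_𝒞 has rank r. Then α⁽¹⁾ = α⁽²⁾ and β⁽¹⁾ = β⁽²⁾. -/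
open Matrix

lemma rank_full_injective {r : ℕ} {ι : Type*} [Fintype ι]
    (M : Matrix ι (Fin r) ℝ) (h : M.rank = r) :
    Function.Injective M.mulVec := by
  have hker : LinearMap.ker M.mulVecLin = ⊥ := by
    have h1 := LinearMap.finrank_range_add_finrank_ker M.mulVecLin
    rw [show Module.finrank ℝ (Fin r → ℝ) = r by simp] at h1
    have : Module.finrank ℝ (LinearMap.ker M.mulVecLin) = 0 := by
      have : M.rank = Module.finrank ℝ (LinearMap.range M.mulVecLin) := rfl
      omega
    exact Submodule.finrank_eq_zero.mp this
  intro x y hxy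
  have := LinearMap.ker_eq_bot.mp hker
  exact this hxy
  
/-- Identifiability of (α, β) under the sparsity condition. -/
theorem sparsity_identifiability
    {p r s : ℕ} (hrs : r ≤ s) (hsp : s ≤ p)
    (β₁ β₂ : Fin p → ℝ) (α₁ α₂ : Fin r → ℝ)
    (Γ : Matrix (Fin p) (Fin r) ℝ)
    (heq : β₁ + Γ.mulVec α₁ = β₂ + Γ.mulVec α₂)
    (hβ₁ : (Finset.univ.filter fun j => β₁ j ≠ 0).card ≤ (p - s) / 2)
    (hβ₂ : (Finset.univ.filter fun j => β₂ j ≠ 0).card ≤ (p - s) / 2)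
    (hrank : ∀ C : Finset (Fin p), C.card = s →
      (Γ.submatrix (fun i : {x // x ∈ C} => (i : Fin p)) id).rank = r) :
    α₁ = α₂ ∧ β₁ = β₂ := by
  set δ : Fin p → ℝ := β₁ - β₂ with hδ
  have hΓδ : Γ.mulVec (α₂ - α₁) = δ := by
    have := heq
    funext j
    have h := congrFun heq j
    simp [Matrix.mulVec_sub, hδ] at h ⊢
    linarith
  -- support of δ
  set S : Finset (Fin p) := Finset.univ.filter fun j => δ j ≠ 0 with hS
  have hSsub : S ⊆ (Finset.univ.filter fun j => β₁ j ≠ 0) ∪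
      (Finset.univ.filter fun j => β₂ j ≠ 0) := by
    intro j hj
    simp only [hS, Finset.mem_filter, Finset.mem_union, Finset.mem_univ, true_and] at hj ⊢
    by_contra hc
    push_neg at hc
    simp [hδ, hc.1, hc.2] at hj
  have hScard : S.card ≤ p - s := by
    calc S.card ≤ _ := Finset.card_le_card hSsub
    _ ≤ _ + _ := Finset.card_union_le _ _
    _ ≤ (p - s) / 2 + (p - s) / 2 := by omega
    _ ≤ p - s := by omega
  have hcompl : s ≤ Sᶜ.card := by
    have := Finset.card_compl S
    simp only [Fintype.card_fin] at this
    omega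
  obtain ⟨C, hCsub, hCcard⟩ := Finset.exists_subset_card_eq hcompl
  have hrankC := hrank C hCcard
  have hinj := rank_full_injective _ hrankC
  have hzero : (Γ.submatrix (fun i : {x // x ∈ C} => (i : Fin p)) id).mulVec (α₂ - α₁) = 0 := by
    funext i
    have hiC : (i : Fin p) ∈ C := i.2
    have hiS : (i : Fin p) ∉ S := fun h => (Finset.mem_compl.mp (hCsub hiC)) h
    have hδi : δ (i : Fin p) = 0 := by
      by_contra h
      exact hiS (by simp [hS, h])
    have : (Γ.submatrix (fun i : {x // x ∈ C} => (i : Fin p)) id).mulVec (α₂ - α₁) i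
        = Γ.mulVec (α₂ - α₁) (i : Fin p) := rfl
    rw [this, hΓδ, hδi]
    rfl
  have hα : α₂ - α₁ = 0 := by
    apply hinj
    rw [hzero, Matrix.mulVec_zero]
  have hα' : α₁ = α₂ := by
    funext j
    have := congrFun hα j
    simp at this
    linarith
  refine ⟨hα', ?_⟩
  have : δ = 0 := by rw [← hΓδ, hα', sub_self, Matrix.mulVec_zero]
  funext j
  have := congrFun this j
  simp [hδ] at this
  linarith
end
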